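/- arXiv:1606.07232 — 4 statements merged into one kernel-verified Lean document; each statement's English description precedes it below -/
import Mathlib

section
/- Given an integer $B \geq 1$ and an integer number of training slots $N_t$ divisible by $2^B$, define $g(B) = \pi\,(2^{-B})^{N_t/2^B}$ (the phase-error upper bound of Algorithm A1). Then $g(1) = g(2)$, and for all integers $B \geq 2$ with $N_t \geq 2^{B+1}$, $g(B+1) > g(B)$; hence $B=1$ or $B=2$ minimizes the phase-error bound. -/
open Real

/-!
Writing `g B = π * 2 ^ (-(B * Nt / 2 ^ B))`, everything reduces to the exponent `B * Nt / 2 ^ B`.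
It takes the same value at `B = 1` and `B = 2`, and passing from `B` to `B + 1` multiplies it by
`(B + 1) / (2 * B)`, which is `< 1` as soon as `B ≥ 2`.
-/

lemma succ_mul_div_two_pow_succ_lt {x : ℝ} (hx : 0 < x) {B : ℕ} (hB : 1 < B) :
    (B + 1 : ℝ) * (x / 2 ^ (B + 1)) < B * (x / 2 ^ B) := by
  have hB' : (1 : ℝ) < B := by exact_mod_cast hB
  calc (B + 1 : ℝ) * (x / 2 ^ (B + 1)) = (B + 1) / 2 * (x / 2 ^ B) := by
        rw [pow_succ]; ring
    _ < B * (x / 2 ^ B) := by gcongr; linarith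

theorem stmt_3 (Nt : ℕ) (g : ℕ → ℝ)
    (hg : ∀ B : ℕ, g B = π * ((2 : ℝ) ^ (-(B : ℝ))) ^ ((Nt : ℝ) / 2 ^ B)) :
    g 1 = g 2 ∧
    ∀ B : ℕ, 2 ≤ B → 2 ^ (B + 1) ≤ Nt → g B < g (B + 1) := by
  have hg' (B : ℕ) : g B = π * (2 : ℝ) ^ (-(B * ((Nt : ℝ) / 2 ^ B))) := by
    rw [hg, ← rpow_mul zero_le_two, neg_mul]
  refine ⟨?_, fun B hB hNt => ?_⟩
  · rw [hg', hg']
    congr 2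
    push_cast
    ring
  · have hNt_pos : (0 : ℝ) < Nt := by exact_mod_cast (Nat.two_pow_pos _).trans_le hNt
    rw [hg', hg', Nat.cast_succ]
    gcongr
    exact rpow_lt_rpow_of_exponent_lt one_lt_two
      (neg_lt_neg (succ_mul_div_two_pow_succ_lt hNt_pos hB))
end

section
/- For all integers $B \geq 1$ and real $N_t \geq 2^{B+1}$, the inequality $\frac{1}{2^B}\left(\frac{1}{2^B+1}\right)^{N_t/2^B - 1} < \frac{1}{2^{B+1}}\left(\frac{1}{2^{B+1}+1}\right)^{N_t/2^{B+1} - 1}$ holds; that is, the phase-error upper bound of Algorithm A2 is strictly increasing in $B$, so $B=1$ is optimal. -/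
open Real

theorem stmt_4 (B : ℕ) (hB : 1 ≤ B) (Nt : ℝ) (hNt : 2 ^ (B + 1) ≤ Nt) :
    (1 / 2 ^ B : ℝ) * (1 / (2 ^ B + 1)) ^ (Nt / 2 ^ B - 1)
      < (1 / 2 ^ (B + 1) : ℝ) * (1 / (2 ^ (B + 1) + 1)) ^ (Nt / 2 ^ (B + 1) - 1) := by
  set a : ℝ := 2 ^ B with ha_def
  have ha2 : (2 : ℝ) ≤ a := by
    calc (2:ℝ) = 2 ^ 1 := (pow_one 2).symm
    _ ≤ 2 ^ B := pow_le_pow_right₀ one_le_two hB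
  have ha0 : (0 : ℝ) < a := by linarith
  have hpow : (2:ℝ) ^ (B + 1) = 2 * a := by rw [pow_succ, ha_def]; ring
  rw [hpow] at hNt ⊢
  have h1 : (0:ℝ) < a + 1 := by linarith
  have h2 : (0:ℝ) < 2 * a + 1 := by linarith
  have h2a : (0:ℝ) < 2 * a := by linarith
  -- rewrite both sides as exponentials
  rw [Real.rpow_def_of_pos (by positivity : (0:ℝ) < 1 / (a + 1)),
      Real.rpow_def_of_pos (by positivity : (0:ℝ) < 1 / (2 * a + 1))]
  have e1 : (1 / a : ℝ) = Real.exp (Real.log (1 / a)) := (Real.exp_log (by positivity)).symm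
  have e2 : (1 / (2 * a) : ℝ) = Real.exp (Real.log (1 / (2 * a))) :=
    (Real.exp_log (by positivity)).symm
  rw [e1, e2, ← Real.exp_add, ← Real.exp_add, Real.exp_lt_exp]
  have l1 : Real.log (1 / a) = -Real.log a := by rw [one_div, Real.log_inv]
  have l2 : Real.log (1 / (2 * a)) = -(Real.log 2 + Real.log a) := by
    rw [one_div, Real.log_inv, Real.log_mul (by norm_num) (ne_of_gt ha0)]
  have l3 : Real.log (1 / (a + 1)) = -Real.log (a + 1) := by rw [one_div, Real.log_inv]
  have l4 : Real.log (1 / (2 * a + 1)) = -Real.log (2 * a + 1) := by rw [one_div, Real.log_inv]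
  rw [l1, l2, l3, l4]
  set s : ℝ := Nt / (2 * a) with hs_def
  have hs : (1:ℝ) ≤ s := (one_le_div h2a).mpr hNt
  have hNa : Nt / a = 2 * s := by
    rw [hs_def]; field_simp
  rw [hNa]
  have hL1 : Real.log 2 < Real.log (a + 1) := by
    apply Real.log_lt_log (by norm_num); linarith
  have hL2 : Real.log (2 * a + 1) ≤ 2 * Real.log (a + 1) := by
    have : (2 * a + 1 : ℝ) ≤ (a + 1) ^ 2 := by nlinarith
    calc Real.log (2 * a + 1) ≤ Real.log ((a + 1) ^ 2) := Real.log_le_log h2 this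
    _ = 2 * Real.log (a + 1) := by rw [Real.log_pow]; push_cast; ring
  nlinarith [mul_nonneg (sub_nonneg.mpr hs) (sub_nonneg.mpr hL2)]
end

section
/- Let $M \geq 2$, $\beta_1,\dots,\beta_M > 0$, and phase errors $e_1,\dots,e_M \in [-\pi/2, \pi/2]$. Define recursively $Q^{(2)} = \beta_1 + \beta_2 + 2\sqrt{\beta_1\beta_2}\cos(e_2)$ and $Q^{(k+1)} = \beta_{k+1} + Q^{(k)} + 2\cos(e_{k+1})\sqrt{\beta_{k+1} Q^{(k)}}$ for $k \geq 2$ (with $e_1 = 0$). Then $Q^{(M)} \geq \sum_{m=1}^M \beta_m + \sum_{i\neq j}\sqrt{\beta_i\beta_j}\cos(e_i)\cos(e_j)$. -/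
/-!
Write `aₘ = √βₘ cos eₘ` for the in-phase amplitude of transmitter `m` (so `a₁ = √β₁`).
By induction, `Q⁽ᵏ⁾ ≥ (a₁ + ⋯ + aₖ)² + ∑ₘ (βₘ - aₘ²)`: the new transmitter adds
`βₖ₊₁ + 2 cos eₖ₊₁ √(βₖ₊₁ Q⁽ᵏ⁾)`, and `√Q⁽ᵏ⁾ ≥ a₁ + ⋯ + aₖ` because every residual
`βₘ - aₘ² = βₘ sin² eₘ` is nonnegative. Expanding the square gives the claimed bound,
whose cross terms are the `aᵢ aⱼ`.
-/

open Real Finset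

theorem Finset.sq_sum_eq_sum_sq_add_sum_ne {ι R : Type*} [DecidableEq ι] [CommSemiring R]
    (s : Finset ι) (f : ι → R) :
    (∑ i ∈ s, f i) ^ 2 =
      ∑ i ∈ s, f i ^ 2 + ∑ i ∈ s, ∑ j ∈ s, if i ≠ j then f i * f j else 0 := by
  have hrow : ∀ i ∈ s, ∑ j ∈ s, f i * f j =
      f i ^ 2 + ∑ j ∈ s, if i ≠ j then f i * f j else 0 := by
    intro i hi
    calc ∑ j ∈ s, f i * f j
        = ∑ j ∈ s, ((if i = j then f i * f j else 0) + if i ≠ j then f i * f j else 0) :=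
          sum_congr rfl fun j _ => by by_cases h : i = j <;> simp [h]
      _ = _ := by rw [sum_add_distrib, sum_ite_eq, if_pos hi, sq]
  rw [sq, sum_mul_sum, sum_congr rfl hrow, sum_add_distrib]

theorem Real.sqrt_mul_le_sqrt_mul_of_sq_le {b S Q : ℝ} (hb : 0 ≤ b) (hS : S ^ 2 ≤ Q) :
    √b * S ≤ √(b * Q) := by
  rw [sqrt_mul hb]
  exact mul_le_mul_of_nonneg_left (le_sqrt_of_sq_le hS) (sqrt_nonneg b)

theorem sq_add_add_le_of_sq_add_le {Q S R b c : ℝ} (hb : 0 ≤ b) (hc : 0 ≤ c) (hR : 0 ≤ R)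
    (hQ : S ^ 2 + R ≤ Q) :
    (S + √b * c) ^ 2 + (R + (b - (√b * c) ^ 2)) ≤ b + Q + 2 * c * √(b * Q) := by
  have hS : √b * S ≤ √(b * Q) := sqrt_mul_le_sqrt_mul_of_sq_le hb (by linarith)
  nlinarith [mul_le_mul_of_nonneg_left hS hc]

theorem sq_sqrt_mul_cos_le {b : ℝ} (hb : 0 ≤ b) (x : ℝ) : (√b * cos x) ^ 2 ≤ b := by
  rw [mul_pow, sq_sqrt hb]
  exact mul_le_of_le_one_right hb (cos_sq_le_one x)

theorem sq_sum_add_sum_residual_le (β e Q : ℕ → ℝ) (hβ : ∀ m, 0 ≤ β m)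
    (he : ∀ m, e m ∈ Set.Icc (-(π / 2)) (π / 2)) (he1 : e 1 = 0)
    (hQ2 : Q 2 = β 1 + β 2 + 2 * √(β 1 * β 2) * cos (e 2))
    (hrec : ∀ k, 2 ≤ k → Q (k + 1) = β (k + 1) + Q k + 2 * cos (e (k + 1)) * √(β (k + 1) * Q k))
    {k : ℕ} (hk : 2 ≤ k) :
    (∑ m ∈ Icc 1 k, √(β m) * cos (e m)) ^ 2
      + ∑ m ∈ Icc 1 k, (β m - (√(β m) * cos (e m)) ^ 2) ≤ Q k := by
  induction k, hk using Nat.le_induction with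
  | base =>
    have hIcc : Icc 1 2 = {1, 2} := by decide
    rw [hIcc, sum_pair (by norm_num), sum_pair (by norm_num), hQ2, he1, cos_zero, mul_one,
      sqrt_mul (hβ 1)]
    exact le_of_eq (by ring)
  | succ k hk ih =>
    rw [sum_Icc_succ_top (by omega), sum_Icc_succ_top (by omega), hrec k hk]
    exact sq_add_add_le_of_sq_add_le (hβ _) (cos_nonneg_of_mem_Icc (he _))
      (sum_nonneg fun m _ => sub_nonneg.2 (sq_sqrt_mul_cos_le (hβ m) _)) ih

theorem stmt_8 (M : ℕ) (hM : 2 ≤ M) (β e : ℕ → ℝ) (hβ : ∀ m, 0 < β m)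
    (he : ∀ m, e m ∈ Set.Icc (-(π / 2)) (π / 2)) (he1 : e 1 = 0)
    (Q : ℕ → ℝ)
    (hQ2 : Q 2 = β 1 + β 2 + 2 * Real.sqrt (β 1 * β 2) * Real.cos (e 2))
    (hrec : ∀ k, 2 ≤ k →
      Q (k + 1) = β (k + 1) + Q k
        + 2 * Real.cos (e (k + 1)) * Real.sqrt (β (k + 1) * Q k)) :
    Q M ≥ ∑ m ∈ Finset.Icc 1 M, β m +
      ∑ i ∈ Finset.Icc 1 M, ∑ j ∈ Finset.Icc 1 M, if i ≠ j then
        Real.sqrt (β i * β j) * Real.cos (e i) * Real.cos (e j) else 0 := by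
  have hβ₀ : ∀ m, 0 ≤ β m := fun m => (hβ m).le
  have hcross : ∀ i j, √(β i * β j) * cos (e i) * cos (e j) =
      (√(β i) * cos (e i)) * (√(β j) * cos (e j)) := fun i j => by
    rw [sqrt_mul (hβ₀ i)]; ring
  calc ∑ m ∈ Icc 1 M, β m + ∑ i ∈ Icc 1 M, ∑ j ∈ Icc 1 M,
        (if i ≠ j then √(β i * β j) * cos (e i) * cos (e j) else 0)
      = (∑ m ∈ Icc 1 M, √(β m) * cos (e m)) ^ 2
          + ∑ m ∈ Icc 1 M, (β m - (√(β m) * cos (e m)) ^ 2) := by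
        simp_rw [sq_sum_eq_sum_sq_add_sum_ne, hcross, sum_sub_distrib]
        ring
    _ ≤ Q M := sq_sum_add_sum_residual_le β e Q hβ₀ he he1 hQ2 hrec hM
end

section
/- Suppose the phase errors satisfy $|e_m| \leq \pi\,(2^{-B})^{N_t/2^B}$ for all $m$, with $B \geq 1$ and $N_t \geq 2^B$ so that the bound is at most $\pi/2$. Then the sequential-training efficiency satisfies $\eta = Q_d/Q^\star \geq \frac{1}{Q^\star}\left(\sum_{m=1}^M \beta_m + \sum_{i\neq j}\sqrt{\beta_i\beta_j}\cos^2\left(\pi\,2^{-B N_t/2^B}\right)\right)$, where $Q^\star = \sum_m \beta_m + \sum_{i\neq j}\sqrt{\beta_i\beta_j}$ and $Q_d \geq \sum_m \beta_m + \sum_{i\neq j}\sqrt{\beta_i\beta_j}\cos(e_i)\cos(e_j)$. -/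
open Real Finset

/-
Every phase error lies in `[-ē, ē]` with `ē ≤ π/2`, where `cos` is even, decreasing on `[0, π]`
and nonnegative, so `cos eᵢ cos eⱼ ≥ cos² ē` for every pair. Multiplying by the nonnegative
weights `√(βᵢβⱼ)` and summing bounds `Q_d` from below, and dividing by `Q⋆ ≥ 0` gives the
efficiency bound.
-/

lemma Real.cos_le_cos_of_abs_le {x a : ℝ} (hx : |x| ≤ a) (ha : a ≤ π) : cos a ≤ cos x := by
  rw [← cos_abs x]
  exact cos_le_cos_of_nonneg_of_le_pi (abs_nonneg x) ha hx

lemma Real.cos_sq_le_cos_mul_cos {x y a : ℝ} (hx : |x| ≤ a) (hy : |y| ≤ a) (ha : a ≤ π / 2) :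
    cos a ^ 2 ≤ cos x * cos y := by
  have ha_nonneg : 0 ≤ a := (abs_nonneg x).trans hx
  have hcos_nonneg : 0 ≤ cos a := cos_nonneg_of_mem_Icc ⟨by linarith [pi_pos], ha⟩
  have hxa := cos_le_cos_of_abs_le hx (by linarith [pi_pos])
  have hya := cos_le_cos_of_abs_le hy (by linarith [pi_pos])
  rw [sq]
  exact mul_le_mul hxa hya hcos_nonneg (hcos_nonneg.trans hxa)

section OffDiagonal

variable {ι : Type*} [Fintype ι] [DecidableEq ι]

lemma sum_offDiag_ite_mono {f g : ι → ι → ℝ} (h : ∀ i j, i ≠ j → f i j ≤ g i j) :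
    (∑ i, ∑ j, if i ≠ j then f i j else 0) ≤ ∑ i, ∑ j, if i ≠ j then g i j else 0 := by
  gcongr with i _ j _
  split_ifs with hij
  · exact h i j hij
  · exact le_rfl

lemma sum_offDiag_ite_nonneg {f : ι → ι → ℝ} (h : ∀ i j, i ≠ j → 0 ≤ f i j) :
    0 ≤ ∑ i, ∑ j, if i ≠ j then f i j else 0 := by
  simpa using sum_offDiag_ite_mono (f := fun _ _ => 0) h

lemma sum_offDiag_mul_cos_sq_le {w : ι → ι → ℝ} (hw : ∀ i j, 0 ≤ w i j) {e : ι → ℝ} {a : ℝ}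
    (he : ∀ i, |e i| ≤ a) (ha : a ≤ π / 2) :
    (∑ i, ∑ j, if i ≠ j then w i j * cos a ^ 2 else 0) ≤
      ∑ i, ∑ j, if i ≠ j then w i j * cos (e i) * cos (e j) else 0 :=
  sum_offDiag_ite_mono fun i j _ => by
    rw [mul_assoc]
    exact mul_le_mul_of_nonneg_left (cos_sq_le_cos_mul_cos (he i) (he j) ha) (hw i j)

end OffDiagonal

theorem stmt_10_general (M : ℕ) (β : Fin M → ℝ) (hβ : ∀ m, 0 < β m)
    (e : Fin M → ℝ) (B : ℕ) (Nt : ℝ)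
    (hbound : π * ((2 : ℝ) ^ (-(B : ℝ))) ^ (Nt / 2 ^ B) ≤ π / 2)
    (he : ∀ m, |e m| ≤ π * ((2 : ℝ) ^ (-(B : ℝ))) ^ (Nt / 2 ^ B))
    (Qd Qstar : ℝ)
    (hQstar : Qstar = ∑ m, β m +
      ∑ i, ∑ j, if i ≠ j then Real.sqrt (β i * β j) else 0)
    (hQd : Qd ≥ ∑ m, β m +
      ∑ i, ∑ j, if i ≠ j then
        Real.sqrt (β i * β j) * Real.cos (e i) * Real.cos (e j) else 0) :
    Qd / Qstar ≥ (1 / Qstar) * (∑ m, β m +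
      ∑ i, ∑ j, if i ≠ j then
        Real.sqrt (β i * β j) *
          Real.cos (π * ((2 : ℝ) ^ (-(B : ℝ))) ^ (Nt / 2 ^ B)) ^ 2 else 0) := by
  have hQstar_nonneg : 0 ≤ Qstar := by
    rw [hQstar]
    exact add_nonneg (sum_nonneg fun m _ => (hβ m).le)
      (sum_offDiag_ite_nonneg fun i j _ => sqrt_nonneg _)
  have hgain := sum_offDiag_mul_cos_sq_le (fun i j => sqrt_nonneg (β i * β j)) he hbound
  rw [ge_iff_le, one_div_mul_eq_div]
  exact div_le_div_of_nonneg_right (by linarith) hQstar_nonneg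

theorem stmt_10 (M : ℕ) (hM : 2 ≤ M) (β : Fin M → ℝ) (hβ : ∀ m, 0 < β m)
    (e : Fin M → ℝ) (B : ℕ) (hB : 1 ≤ B) (Nt : ℝ) (hNt : (2 : ℝ) ^ B ≤ Nt)
    (hbound : π * ((2 : ℝ) ^ (-(B : ℝ))) ^ (Nt / 2 ^ B) ≤ π / 2)
    (he : ∀ m, |e m| ≤ π * ((2 : ℝ) ^ (-(B : ℝ))) ^ (Nt / 2 ^ B))
    (Qd Qstar : ℝ)
    (hQstar : Qstar = ∑ m, β m +
      ∑ i, ∑ j, if i ≠ j then Real.sqrt (β i * β j) else 0)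
    (hQd : Qd ≥ ∑ m, β m +
      ∑ i, ∑ j, if i ≠ j then
        Real.sqrt (β i * β j) * Real.cos (e i) * Real.cos (e j) else 0) :
    Qd / Qstar ≥ (1 / Qstar) * (∑ m, β m +
      ∑ i, ∑ j, if i ≠ j then
        Real.sqrt (β i * β j) *
          Real.cos (π * ((2 : ℝ) ^ (-(B : ℝ))) ^ (Nt / 2 ^ B)) ^ 2 else 0) :=
  stmt_10_general M β hβ e B Nt hbound he Qd Qstar hQstar hQd
end
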